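/- arXiv:1608.06427 — 6 statements merged into one kernel-verified Lean document; each statement's English description precedes it below -/
import Mathlib

section
/- A square nonnegative matrix A is nonnegatively regularizable (i.e., there exists r > 0 and an r-bistochastic matrix W whose nonzero pattern is contained in that of A) if and only if A has support (i.e., there exists a permutation matrix P whose nonzero pattern is contained in that of A). -/
/-!
By Birkhoff's theorem a doubly stochastic matrix is a convex combination of permutation matrices;
a permutation `σ` carrying positive weight satisfies `M i (σ i) > 0` for every `i`. Scaling an
`r`-bistochastic `W ⊆ A` by `r⁻¹` therefore yields a permutation matrix inside the pattern of `A`.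
Conversely, a permutation matrix is itself `1`-bistochastic.
-/

open Matrix BigOperators

/-- `P` is a permutation matrix. -/
def IsPermMatrix {n : ℕ} (P : Matrix (Fin n) (Fin n) ℝ) : Prop :=
  ∃ σ : Equiv.Perm (Fin n), ∀ i j, P i j = if σ i = j then 1 else 0

/-- The nonzero pattern of `W` is contained in that of `A`. -/
def SubPat {n : ℕ} (W A : Matrix (Fin n) (Fin n) ℝ) : Prop :=
  ∀ i j, W i j ≠ 0 → A i j ≠ 0

/-- `W` is a nonnegative matrix with all row sums and column sums equal to `r`. -/
def IsBistochastic {n : ℕ} (W : Matrix (Fin n) (Fin n) ℝ) (r : ℝ) : Prop :=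
  (∀ i j, 0 ≤ W i j) ∧ (∀ i, ∑ j, W i j = r) ∧ (∀ j, ∑ i, W i j = r)

theorem Equiv.Perm.permMatrix_apply_eq_ite {R ι : Type*} [DecidableEq ι] [Zero R] [One R]
    (σ : Equiv.Perm ι) (i j : ι) : σ.permMatrix R i j = if σ i = j then 1 else 0 := by
  simp [PEquiv.toMatrix_apply, Equiv.toPEquiv_apply]

theorem le_sum_smul_permMatrix_apply {R ι : Type*} [Fintype ι] [DecidableEq ι] [Semiring R]
    [PartialOrder R] [IsOrderedRing R] {w : Equiv.Perm ι → R} (hw : ∀ σ, 0 ≤ w σ)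
    (σ : Equiv.Perm ι) (i : ι) : w σ ≤ (∑ τ, w τ • τ.permMatrix R) i (σ i) := by
  have hterm (τ : Equiv.Perm ι) : 0 ≤ w τ * τ.permMatrix R i (σ i) := by
    rw [τ.permMatrix_apply_eq_ite]
    split_ifs <;> simp [hw τ]
  simpa [Matrix.sum_apply, σ.permMatrix_apply_eq_ite] using
    Finset.single_le_sum (fun τ _ => hterm τ) (Finset.mem_univ σ)

theorem exists_perm_forall_pos_of_mem_doublyStochastic {R ι : Type*} [Fintype ι] [DecidableEq ι]
    [Field R] [LinearOrder R] [IsStrictOrderedRing R] {M : Matrix ι ι R}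
    (hM : M ∈ doublyStochastic R ι) : ∃ σ : Equiv.Perm ι, ∀ i, 0 < M i (σ i) := by
  obtain ⟨w, hw_nonneg, hw_sum, rfl⟩ := exists_eq_sum_perm_of_mem_doublyStochastic hM
  obtain ⟨σ, -, hσ⟩ : ∃ σ ∈ Finset.univ, (0 : R) < w σ :=
    Finset.exists_lt_of_sum_lt (by simp [hw_sum])
  exact ⟨σ, fun i => hσ.trans_le (le_sum_smul_permMatrix_apply hw_nonneg σ i)⟩

section Patterns

variable {n : ℕ}

theorem isPermMatrix_iff {P : Matrix (Fin n) (Fin n) ℝ} :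
    IsPermMatrix P ↔ ∃ σ : Equiv.Perm (Fin n), P = σ.permMatrix ℝ := by
  simp only [IsPermMatrix, ← Matrix.ext_iff, Equiv.Perm.permMatrix_apply_eq_ite, eq_comm]

theorem isBistochastic_iff_exists_mem_doublyStochastic {W : Matrix (Fin n) (Fin n) ℝ} {r : ℝ}
    (hr : 0 ≤ r) : IsBistochastic W r ↔ ∃ M ∈ doublyStochastic ℝ (Fin n), W = r • M :=
  (exists_mem_doublyStochastic_eq_smul_iff hr).symm

theorem subPat_permMatrix_iff {σ : Equiv.Perm (Fin n)} {A : Matrix (Fin n) (Fin n) ℝ} :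
    SubPat (σ.permMatrix ℝ) A ↔ ∀ i, A i (σ i) ≠ 0 := by
  simp only [SubPat, Equiv.Perm.permMatrix_apply_eq_ite, ne_eq, ite_eq_right_iff, one_ne_zero,
    imp_false, not_not, forall_eq']

end Patterns

theorem nonnegatively_regularizable_iff_support_general {n : ℕ}
    (A : Matrix (Fin n) (Fin n) ℝ) :
    (∃ r : ℝ, 0 < r ∧ ∃ W : Matrix (Fin n) (Fin n) ℝ, IsBistochastic W r ∧ SubPat W A) ↔
      (∃ P : Matrix (Fin n) (Fin n) ℝ, IsPermMatrix P ∧ SubPat P A) := by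
  constructor
  · rintro ⟨r, hr, W, hW, hWA⟩
    obtain ⟨M, hM, rfl⟩ := (isBistochastic_iff_exists_mem_doublyStochastic hr.le).1 hW
    obtain ⟨σ, hσ⟩ := exists_perm_forall_pos_of_mem_doublyStochastic hM
    refine ⟨σ.permMatrix ℝ, isPermMatrix_iff.2 ⟨σ, rfl⟩, subPat_permMatrix_iff.2 fun i => ?_⟩
    exact hWA i (σ i) (mul_pos hr (hσ i)).ne'
  · rintro ⟨P, hP, hPA⟩
    obtain ⟨σ, rfl⟩ := isPermMatrix_iff.1 hP
    refine ⟨1, one_pos, σ.permMatrix ℝ, ?_, hPA⟩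
    exact (isBistochastic_iff_exists_mem_doublyStochastic zero_le_one).2
      ⟨_, permMatrix_mem_doublyStochastic, (one_smul ℝ _).symm⟩

/-- A square nonnegative matrix is nonnegatively regularizable iff it has support. -/
theorem nonnegatively_regularizable_iff_support {n : ℕ}
    (A : Matrix (Fin n) (Fin n) ℝ) (hA : ∀ i j, 0 ≤ A i j) :
    (∃ r : ℝ, 0 < r ∧ ∃ W : Matrix (Fin n) (Fin n) ℝ, IsBistochastic W r ∧ SubPat W A) ↔
      (∃ P : Matrix (Fin n) (Fin n) ℝ, IsPermMatrix P ∧ SubPat P A) :=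
  nonnegatively_regularizable_iff_support_general A
end

section
/- If a square matrix A has total support, then the matrix W obtained by summing, over all nonzero entries u of A, a permutation matrix P_u satisfying [P_u]_{ij} = 1 at position u and P_u ⊆ A, is m-bistochastic where m is the number of nonzero entries of A, and W has the same zero/nonzero pattern as A; hence a positively regularizable matrix admits a regularization with positive integer weights. -/
open Matrix BigOperators

/-- `A` has total support. -/
def TotalSupport {n : ℕ} (A : Matrix (Fin n) (Fin n) ℝ) : Prop :=
  A ≠ 0 ∧ ∀ i j, A i j ≠ 0 → ∃ P, IsPermMatrix P ∧ P i j = 1 ∧ SubPat P A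

open scoped Classical in
/-- If `A` has total support, then summing, over all nonzero entries `(i,j)` of `A`, a
permutation matrix `Pc i j` with a `1` in position `(i,j)` and pattern contained in `A`,
yields an `m`-bistochastic matrix with the same pattern as `A` (where `m` is the number of
nonzero entries of `A`), whose entries are moreover nonnegative integers. -/
theorem total_support_sum_of_permutations {n : ℕ}
    (A : Matrix (Fin n) (Fin n) ℝ) (hA : TotalSupport A)
    (Pc : Fin n → Fin n → Matrix (Fin n) (Fin n) ℝ)
    (hPc : ∀ i j, A i j ≠ 0 →
      IsPermMatrix (Pc i j) ∧ (Pc i j) i j = 1 ∧ SubPat (Pc i j) A) :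
    IsBistochastic
        (∑ p ∈ Finset.univ.filter (fun p : Fin n × Fin n => A p.1 p.2 ≠ 0), Pc p.1 p.2)
        ((Finset.univ.filter (fun p : Fin n × Fin n => A p.1 p.2 ≠ 0)).card) ∧
      SubPat (∑ p ∈ Finset.univ.filter (fun p : Fin n × Fin n => A p.1 p.2 ≠ 0), Pc p.1 p.2) A ∧
      SubPat A (∑ p ∈ Finset.univ.filter (fun p : Fin n × Fin n => A p.1 p.2 ≠ 0), Pc p.1 p.2) ∧
      ∀ i j, ∃ m : ℕ,
        (∑ p ∈ Finset.univ.filter (fun p : Fin n × Fin n => A p.1 p.2 ≠ 0), Pc p.1 p.2) i j = m := by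
  classical
  set s := Finset.univ.filter (fun p : Fin n × Fin n => A p.1 p.2 ≠ 0) with hs
  set W := ∑ p ∈ s, Pc p.1 p.2 with hW
  have hmem : ∀ p : Fin n × Fin n, p ∈ s → A p.1 p.2 ≠ 0 := by
    intro p hp; simpa [hs] using hp
  have happly : ∀ i j, W i j = ∑ p ∈ s, Pc p.1 p.2 i j := by
    intro i j; simp [hW, Matrix.sum_apply]
  have h01 : ∀ p ∈ s, ∀ i j, Pc p.1 p.2 i j = 0 ∨ Pc p.1 p.2 i j = 1 := by
    intro p hp i j
    obtain ⟨⟨σ, hσ⟩, -, -⟩ := hPc p.1 p.2 (hmem p hp)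
    rw [hσ]; split <;> simp
  have hnonneg : ∀ i j, 0 ≤ W i j := by
    intro i j; rw [happly]
    exact Finset.sum_nonneg fun p hp => by rcases h01 p hp i j with h | h <;> simp [h]
  refine ⟨⟨hnonneg, ?_, ?_⟩, ?_, ?_, ?_⟩
  · intro i
    calc ∑ j, W i j = ∑ p ∈ s, ∑ j, Pc p.1 p.2 i j := by
          simp only [happly]; rw [Finset.sum_comm]
      _ = ∑ p ∈ s, (1 : ℝ) := by
          refine Finset.sum_congr rfl fun p hp => ?_
          obtain ⟨⟨σ, hσ⟩, -, -⟩ := hPc p.1 p.2 (hmem p hp)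
          simp [hσ]
      _ = s.card := by simp
  · intro j
    calc ∑ i, W i j = ∑ p ∈ s, ∑ i, Pc p.1 p.2 i j := by
          simp only [happly]; rw [Finset.sum_comm]
      _ = ∑ p ∈ s, (1 : ℝ) := by
          refine Finset.sum_congr rfl fun p hp => ?_
          obtain ⟨⟨σ, hσ⟩, -, -⟩ := hPc p.1 p.2 (hmem p hp)
          have : ∑ i, Pc p.1 p.2 i j = ∑ i, if σ i = j then (1:ℝ) else 0 := by
            exact Finset.sum_congr rfl fun i _ => hσ i j
          have this2 : ∀ i, (if σ i = j then (1:ℝ) else 0) = if i = σ.symm j then (1:ℝ) else 0 := by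
            intro i
            have hc : (σ i = j) ↔ (i = σ.symm j) := by
              constructor
              · intro h; rw [← h, Equiv.symm_apply_apply]
              · intro h; rw [h, Equiv.apply_symm_apply]
            rw [if_congr hc rfl rfl]
          rw [this, Finset.sum_congr rfl (fun i _ => this2 i)]
          simp
      _ = s.card := by simp
  · intro i j hij
    rw [happly] at hij
    obtain ⟨p, hp, hne⟩ := Finset.exists_ne_zero_of_sum_ne_zero hij
    exact (hPc p.1 p.2 (hmem p hp)).2.2 i j hne
  · intro i j hij
    have hpmem : (i, j) ∈ s := by simp [hs, hij]
    obtain ⟨-, h1, -⟩ := hPc i j hij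
    have : (1:ℝ) ≤ W i j := by
      rw [happly]
      have := Finset.single_le_sum (f := fun p : Fin n × Fin n => Pc p.1 p.2 i j)
        (fun p hp => by rcases h01 p hp i j with h | h <;> simp [h]) hpmem
      simpa [h1] using this
    linarith
  · intro i j
    refine ⟨(s.filter (fun p => Pc p.1 p.2 i j = 1)).card, ?_⟩
    have hterm : ∀ p ∈ s, Pc p.1 p.2 i j = if Pc p.1 p.2 i j = 1 then (1:ℝ) else 0 := by
      intro p hp; rcases h01 p hp i j with h | h <;> simp [h]
    rw [happly, Finset.sum_congr rfl hterm, ← Finset.sum_filter]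
    simp
end

section
/- Let G be a connected undirected graph that is not bipartite, with incidence matrix B (of size n × m, where b_{il} = 1 if node i is an endpoint of edge l, else 0). Then for every r > 0 the linear system Bw = re has a solution w ≠ 0; hence G is arbitrarily regularizable. -/
open Matrix BigOperators

open Classical in
/-- An undirected graph is arbitrarily regularizable if there is a real weighting of its
edges, not identically zero, and `r > 0`, such that `B w = r e` where `B` is the
incidence matrix. -/
def ArbReg {V : Type*} [Fintype V] [DecidableEq V] (G : SimpleGraph V) : Prop :=
  ∃ (w : Sym2 V → ℝ) (r : ℝ), 0 < r ∧ w ≠ 0 ∧ (∀ e ∉ G.edgeSet, w e = 0) ∧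
    G.incMatrix ℝ *ᵥ w = fun _ => r

/-- `U` together with its complement is a bipartition of `G`. -/
def IsBipartition {V : Type*} (G : SimpleGraph V) (U : Set V) : Prop :=
  ∀ ⦃u v⦄, G.Adj u v → ((u ∈ U) ↔ (v ∉ U))

/-
An odd closed walk `p` at `u` carries edge weights `±1`, alternating along the walk, whose image
under the incidence matrix is `2 eᵤ`: every interior visit of a vertex is cancelled by the
opposite signs of the two edges used, and at `u` the first and (by oddness) the last edge both
carry `+1`. In a connected non-bipartite graph every vertex has an odd closed walk, so the
incidence matrix is onto (this is its rank `n`), and in particular `B w = r e` is solvable.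
-/

namespace SimpleGraph

variable {V : Type*} {G : SimpleGraph V}

theorem Colorable.exists_isBipartition (h : G.Colorable 2) : ∃ U : Set V, IsBipartition G U := by
  obtain ⟨c⟩ := h
  refine ⟨{v | c v = 0}, fun u v huv => ?_⟩
  have hne : c u ≠ c v := c.valid huv
  change c u = 0 ↔ ¬c v = 0
  omega

theorem exists_odd_loop_of_not_isBipartition (hnb : ¬ ∃ U : Set V, IsBipartition G U) :
    ∃ (u : V) (p : G.Walk u u), Odd p.length := by
  by_contra! h
  refine hnb (two_colorable_iff_forall_loop_even.2 fun u p => ?_).exists_isBipartition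
  exact Nat.not_odd_iff_even.1 (h u p)

theorem Preconnected.exists_odd_loop (hc : G.Preconnected) {u : V} {p : G.Walk u u}
    (hp : Odd p.length) (v : V) : ∃ q : G.Walk v v, Odd q.length := by
  obtain ⟨s⟩ := hc v u
  refine ⟨(s.append p).append s.reverse, ?_⟩
  simp only [Walk.length_append, Walk.length_reverse]
  rw [add_right_comm, ← two_mul]
  exact (even_two_mul _).add_odd hp

theorem incMatrix_mulVec_single_mk [DecidableEq V] [DecidableRel G.Adj] {R : Type*}
    [NonAssocSemiring R] [Fintype (Sym2 V)] {a b : V} (h : G.Adj a b) :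
    G.incMatrix R *ᵥ Pi.single s(a, b) 1 = Pi.single a 1 + Pi.single b 1 := by
  ext x
  simp only [mulVec_single_one, col_apply, incMatrix_apply', mk'_mem_incidenceSet_iff, h,
    true_and, Pi.add_apply, Pi.single_apply]
  split_ifs <;> simp_all [h.ne]

namespace Walk

variable [DecidableEq V] (R : Type*) [Ring R]

def alternatingEdgeWeight : ∀ {u v : V}, G.Walk u v → Sym2 V → R
  | _, _, nil => 0
  | _, _, @cons _ _ a b _ _ p => Pi.single s(a, b) 1 - p.alternatingEdgeWeight

variable {R}

theorem alternatingEdgeWeight_eq_zero_of_notMem_edgeSet {u v : V} (p : G.Walk u v)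
    {e : Sym2 V} (he : e ∉ G.edgeSet) : p.alternatingEdgeWeight R e = 0 := by
  induction p with
  | nil => rfl
  | @cons a b _ h p ih =>
    have hne : e ≠ s(a, b) := by rintro rfl; exact he h
    simp [alternatingEdgeWeight, ih, hne]

theorem incMatrix_mulVec_alternatingEdgeWeight [DecidableRel G.Adj] [Fintype (Sym2 V)]
    {u v : V} (p : G.Walk u v) :
    G.incMatrix R *ᵥ p.alternatingEdgeWeight R =
      Pi.single u 1 - (-1) ^ p.length • Pi.single v 1 := by
  induction p with
  | nil => simp [alternatingEdgeWeight]
  | cons h p ih =>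
    rw [alternatingEdgeWeight, mulVec_sub, incMatrix_mulVec_single_mk h, ih, length_cons,
      pow_succ, mul_neg_one, neg_smul]
    abel

theorem incMatrix_mulVec_alternatingEdgeWeight_of_odd [DecidableRel G.Adj] [Fintype (Sym2 V)]
    {u : V} (p : G.Walk u u) (hp : Odd p.length) :
    G.incMatrix R *ᵥ p.alternatingEdgeWeight R = (2 : R) • Pi.single u 1 := by
  rw [incMatrix_mulVec_alternatingEdgeWeight, hp.neg_one_pow, neg_one_smul, sub_neg_eq_add,
    two_smul]

end Walk

theorem exists_incMatrix_mulVec_eq [Fintype V] [DecidableEq V] [DecidableRel G.Adj]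
    {R : Type*} [Field R] [NeZero (2 : R)] (hodd : ∀ u : V, ∃ p : G.Walk u u, Odd p.length)
    (f : V → R) : ∃ w : Sym2 V → R, (∀ e ∉ G.edgeSet, w e = 0) ∧ G.incMatrix R *ᵥ w = f := by
  choose p hp using hodd
  refine ⟨∑ u, (f u / 2) • (p u).alternatingEdgeWeight R, fun e he => ?_, ?_⟩
  · simp [Walk.alternatingEdgeWeight_eq_zero_of_notMem_edgeSet _ he]
  · simp_rw [mulVec_sum, mulVec_smul, Walk.incMatrix_mulVec_alternatingEdgeWeight_of_odd _ (hp _),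
      smul_smul, div_mul_cancel₀ _ (two_ne_zero' R), ← Pi.single_smul', smul_eq_mul, mul_one]
    exact Finset.univ_sum_single f

end SimpleGraph

open Classical in
/-- A connected non-bipartite graph: for every `r > 0` the system `B w = r e` has a
solution `w ≠ 0`; hence the graph is arbitrarily regularizable. -/
theorem connected_not_bipartite_arbitrarily_regularizable
    {V : Type*} [Fintype V] [DecidableEq V] (G : SimpleGraph V)
    (hc : G.Connected) (hnb : ¬ ∃ U : Set V, IsBipartition G U) :
    (∀ r : ℝ, 0 < r → ∃ w : Sym2 V → ℝ, w ≠ 0 ∧ (∀ e ∉ G.edgeSet, w e = 0) ∧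
      G.incMatrix ℝ *ᵥ w = fun _ => r) ∧ ArbReg G := by
  have solvable (r : ℝ) (hr : 0 < r) : ∃ w : Sym2 V → ℝ, w ≠ 0 ∧ (∀ e ∉ G.edgeSet, w e = 0) ∧
      G.incMatrix ℝ *ᵥ w = fun _ => r := by
    obtain ⟨u, p, hp⟩ := SimpleGraph.exists_odd_loop_of_not_isBipartition hnb
    obtain ⟨w, hw, hBw⟩ := SimpleGraph.exists_incMatrix_mulVec_eq
      (hc.preconnected.exists_odd_loop hp) fun _ => r
    refine ⟨w, ?_, hw, hBw⟩
    rintro rfl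
    rw [mulVec_zero] at hBw
    exact hr.ne (congrFun hBw u)
  obtain ⟨w, hw0, hw, hBw⟩ := solvable 1 one_pos
  exact ⟨solvable, w, 1, one_pos, hw0, hw, hBw⟩
end

section
/- Let G be a connected bipartite undirected graph with bipartition classes U and W of equal cardinality (balanced). Then G is arbitrarily regularizable: for every r > 0 there exists a vector w ≠ 0 of edge weights (possibly negative) with Bw = re, where B is the incidence matrix of G. -/
/-!
The vector `r e` lies in the column space of `B` iff it is orthogonal to every `x` with
`xᵀ B = 0`, i.e. with `x u + x v = 0` on every edge. On a connected graph with bipartition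
`(U, Uᶜ)` such an `x` is a multiple of the vector equal to `1` on `U` and `-1` on `Uᶜ`, which is
orthogonal to `e` exactly when `|U| = |Uᶜ|`. A preimage of `r e` may be taken supported on the
edges, and it is nonzero because `r e` is.
-/

open Matrix BigOperators

theorem Matrix.mem_range_mulVecLin_iff {K m n : Type*} [Field K] [Fintype m] [Fintype n]
    (A : Matrix m n K) (y : m → K) :
    y ∈ LinearMap.range A.mulVecLin ↔ ∀ x : m → K, x ᵥ* A = 0 → x ⬝ᵥ y = 0 := by
  classical
  constructor
  · rintro ⟨v, rfl⟩ x hx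
    rw [mulVecLin_apply, dotProduct_mulVec, hx, zero_dotProduct]
  · intro h
    rw [← Subspace.forall_mem_dualAnnihilator_apply_eq_zero_iff]
    intro φ hφ
    obtain ⟨x, rfl⟩ := (dotProductEquiv K m).surjective φ
    rw [dotProductEquiv_apply_apply]
    refine h x (funext fun j => ?_)
    have hj := (Submodule.mem_dualAnnihilator _).mp hφ _ ⟨Pi.single j 1, rfl⟩
    rwa [dotProductEquiv_apply_apply, mulVecLin_apply, dotProduct_mulVec,
      dotProduct_single_one] at hj

namespace SimpleGraph

variable {V R : Type*} [Fintype V] [DecidableEq V] (G : SimpleGraph V) [DecidableRel G.Adj]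

theorem vecMul_incMatrix_apply_of_adj [NonAssocSemiring R] (x : V → R) {u v : V}
    (h : G.Adj u v) : (x ᵥ* G.incMatrix R) s(u, v) = x u + x v := by
  have hends : ({w | w = u ∨ w = v} : Finset V) = {u, v} := by ext; simp
  simp only [vecMul, dotProduct, incMatrix_apply', mul_ite, mul_one, mul_zero,
    mk'_mem_incidenceSet_iff, h, true_and, Finset.sum_ite, Finset.sum_const_zero, add_zero,
    hends, Finset.sum_pair h.ne]

omit [Fintype V] in
theorem incMatrix_mulVec_indicator_edgeSet [NonAssocSemiring R] [Fintype (Sym2 V)]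
    (w : Sym2 V → R) : G.incMatrix R *ᵥ G.edgeSet.indicator w = G.incMatrix R *ᵥ w := by
  funext i
  refine Finset.sum_congr rfl fun e _ => ?_
  by_cases he : e ∈ G.edgeSet
  · rw [Set.indicator_of_mem he]
  · simp [G.incMatrix_of_notMem_incidenceSet fun hi : e ∈ G.incidenceSet i => he hi.1]

end SimpleGraph

theorem SimpleGraph.Reachable.apply_eq_of_forall_adj {V α : Type*} {G : SimpleGraph V}
    {f : V → α} (hf : ∀ ⦃u v⦄, G.Adj u v → f u = f v) {u v : V} (h : G.Reachable u v) :
    f u = f v := by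
  obtain ⟨p⟩ := h
  induction p with
  | nil => rfl
  | cons hadj _ ih => exact (hf hadj).trans ih

open Classical in
noncomputable def Set.signIndicator {V : Type*} (U : Set V) (v : V) : ℝ :=
  if v ∈ U then 1 else -1

theorem Set.signIndicator_mul_self {V : Type*} (U : Set V) (v : V) :
    U.signIndicator v * U.signIndicator v = 1 := by
  unfold Set.signIndicator
  split_ifs <;> norm_num

theorem Set.sum_signIndicator_eq_zero {V : Type*} [Fintype V] {U : Set V}
    (hbal : U.ncard = Uᶜ.ncard) : ∑ v, U.signIndicator v = 0 := by
  classical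
  simp only [Set.signIndicator, Finset.sum_ite, Finset.sum_const, nsmul_eq_mul, mul_one, mul_neg]
  rw [Set.ncard_eq_toFinset_card', Set.ncard_eq_toFinset_card'] at hbal
  simp only [← Set.filter_mem_univ_eq_toFinset, Set.mem_compl_iff] at hbal
  rw [hbal, add_neg_cancel]

namespace IsBipartition

variable {V : Type*} {G : SimpleGraph V} {U : Set V}

theorem signIndicator_eq_neg_of_adj (hU : IsBipartition G U) {u v : V} (h : G.Adj u v) :
    U.signIndicator u = -U.signIndicator v := by
  by_cases hu : u ∈ U
  · simp [Set.signIndicator, hu, (hU h).mp hu]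
  · have hv : v ∈ U := by simpa [hu] using (hU h).not
    simp [Set.signIndicator, hu, hv]

theorem exists_eq_smul_signIndicator (hU : IsBipartition G U) (hc : G.Preconnected)
    {x : V → ℝ} (hx : ∀ ⦃u v⦄, G.Adj u v → x u + x v = 0) :
    ∃ c : ℝ, x = c • U.signIndicator := by
  have hconst : ∀ ⦃u v⦄, G.Adj u v → U.signIndicator u * x u = U.signIndicator v * x v :=
    fun u v h => by rw [hU.signIndicator_eq_neg_of_adj h, eq_neg_of_add_eq_zero_left (hx h)]; ring
  rcases isEmpty_or_nonempty V with hV | ⟨⟨v₀⟩⟩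
  · exact ⟨0, funext hV.elim⟩
  refine ⟨U.signIndicator v₀ * x v₀, funext fun v => ?_⟩
  rw [Pi.smul_apply, smul_eq_mul, ← (hc v v₀).apply_eq_of_forall_adj hconst, mul_comm,
    ← mul_assoc, U.signIndicator_mul_self, one_mul]

variable [Fintype V] [DecidableEq V] [DecidableRel G.Adj]

theorem const_mem_range_incMatrix (hU : IsBipartition G U) (hc : G.Preconnected)
    (hbal : U.ncard = Uᶜ.ncard) (r : ℝ) :
    (fun _ => r) ∈ LinearMap.range (G.incMatrix ℝ).mulVecLin := by
  rw [Matrix.mem_range_mulVecLin_iff]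
  intro x hx
  obtain ⟨c, rfl⟩ := hU.exists_eq_smul_signIndicator hc (x := x) fun u v h => by
    rw [← G.vecMul_incMatrix_apply_of_adj _ h, hx, Pi.zero_apply]
  calc (c • U.signIndicator) ⬝ᵥ (fun _ => r) = c * r * ∑ v, U.signIndicator v := by
        simp only [dotProduct, Pi.smul_apply, smul_eq_mul, Finset.mul_sum]
        exact Finset.sum_congr rfl fun _ _ => by ring
    _ = 0 := by rw [Set.sum_signIndicator_eq_zero hbal, mul_zero]

theorem exists_incMatrix_mulVec_eq_const (hU : IsBipartition G U) (hc : G.Preconnected)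
    (hbal : U.ncard = Uᶜ.ncard) (r : ℝ) :
    ∃ w : Sym2 V → ℝ, (∀ e ∉ G.edgeSet, w e = 0) ∧ G.incMatrix ℝ *ᵥ w = fun _ => r := by
  obtain ⟨w, hw⟩ := hU.const_mem_range_incMatrix hc hbal r
  refine ⟨G.edgeSet.indicator w, fun e he => Set.indicator_of_notMem he w, ?_⟩
  rw [G.incMatrix_mulVec_indicator_edgeSet, ← mulVecLin_apply, hw]

end IsBipartition

open Classical in
/-- A connected balanced bipartite graph is arbitrarily regularizable: for every `r > 0`
the system `B w = r e` has a solution `w ≠ 0`. -/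
theorem connected_balanced_bipartite_arbitrarily_regularizable
    {V : Type*} [Fintype V] [DecidableEq V] (G : SimpleGraph V)
    (hc : G.Connected) (U : Set V) (hU : IsBipartition G U)
    (hbal : U.ncard = Uᶜ.ncard) :
    (∀ r : ℝ, 0 < r → ∃ w : Sym2 V → ℝ, w ≠ 0 ∧ (∀ e ∉ G.edgeSet, w e = 0) ∧
      G.incMatrix ℝ *ᵥ w = fun _ => r) ∧ ArbReg G := by
  have regularizable : ∀ r : ℝ, 0 < r → ∃ w : Sym2 V → ℝ, w ≠ 0 ∧
      (∀ e ∉ G.edgeSet, w e = 0) ∧ G.incMatrix ℝ *ᵥ w = fun _ => r := by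
    intro r hr
    obtain ⟨w, hw_edges, hw⟩ := hU.exists_incMatrix_mulVec_eq_const hc.preconnected hbal r
    refine ⟨w, ?_, hw_edges, hw⟩
    rintro rfl
    obtain ⟨v⟩ := hc.nonempty
    exact hr.ne (by simpa using congrFun hw v)
  obtain ⟨w, hw⟩ := regularizable 1 one_pos
  exact ⟨regularizable, w, 1, one_pos, hw⟩
end

section
/- Let G be a connected undirected acyclic graph (a tree) that is not arbitrarily regularizable. Then the system Bw = re has only the trivial solution w = 0, r = 0, where B is the incidence matrix of G. -/
/-!
Let `w` be an edge weighting of a forest with `B w = 0`. The edges of nonzero weight form a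
forest again; if there were any, it would have a leaf `v` with unique neighbour `u`, and then
`0 = (B w)_v = w s(v, u) ≠ 0`. So `w = 0`. A solution of `B w = r e` with `r ≠ 0` would make
the tree arbitrarily regularizable via `w` or `-w`, so `r = 0`.
-/

open Matrix BigOperators

namespace SimpleGraph

variable {V : Type*} {G : SimpleGraph V}

theorem IsAcyclic.exists_leaf [Finite V] (hG : G.IsAcyclic) {a b : V} (hab : G.Adj a b) :
    ∃ v u, G.Adj v u ∧ ∀ x, G.Adj v x → x = u := by
  have : Nonempty V := ⟨a⟩
  obtain ⟨v, _, p, hp, hmax⟩ := Walk.exists_isPath_forall_isPath_length_le_length G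
  have hnil : ¬p.Nil := fun hnil => by
    simpa [hnil.length_eq_zero] using hmax a b hab.toWalk (Walk.IsPath.mk' (by simp [hab.ne]))
  refine ⟨v, p.snd, p.adj_snd hnil, fun x hvx => hG.eq_snd_of_adj_start hp hvx ?_⟩
  by_contra hx
  simpa using hmax x _ (Walk.cons hvx.symm p) (hp.cons hx)

theorem incMatrix_mulVec_apply {R : Type*} [NonAssocSemiring R] [Fintype V] [DecidableEq V]
    [DecidableRel G.Adj] (w : Sym2 V → R) (v : V) :
    (G.incMatrix R *ᵥ w) v = ∑ u ∈ G.neighborFinset v, w s(v, u) := by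
  have hinc : ({e | e ∈ G.incidenceSet v} : Finset (Sym2 V)) =
      (G.neighborFinset v).image (s(v, ·)) := by
    ext e
    induction e using Sym2.ind with | _ a b => ?_
    simp only [Finset.mem_filter, Finset.mem_univ, true_and, Finset.mem_image,
      mem_neighborFinset, mk'_mem_incidenceSet_iff, Sym2.eq_iff]
    grind [adj_comm]
  simp only [mulVec, dotProduct, incMatrix_apply', ite_mul, one_mul, zero_mul]
  rw [← Finset.sum_filter, hinc, Finset.sum_image]
  exact fun x _ y _ => Sym2.congr_right.1

theorem IsAcyclic.eq_zero_of_incMatrix_mulVec_eq_zero {R : Type*} [NonAssocSemiring R]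
    [Fintype V] [DecidableEq V] [DecidableRel G.Adj] (hG : G.IsAcyclic) {w : Sym2 V → R}
    (hw : ∀ e ∉ G.edgeSet, w e = 0) (h0 : G.incMatrix R *ᵥ w = 0) : w = 0 := by
  by_contra hne
  obtain ⟨e, he⟩ : ∃ e, w e ≠ 0 := Function.ne_iff.1 hne
  induction e using Sym2.ind with | _ a b => ?_
  have hab : G.Adj a b := by_contra fun hab => he (hw _ hab)
  obtain ⟨v, u, hvuH, hleaf⟩ :=
    (hG.anti (G.deleteEdges_le {e | w e = 0})).exists_leaf (deleteEdges_adj.2 ⟨hab, he⟩)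
  obtain ⟨hvu, hwvu⟩ := deleteEdges_adj.1 hvuH
  have hrow : (G.incMatrix R *ᵥ w) v = w s(v, u) := by
    rw [incMatrix_mulVec_apply, Finset.sum_eq_single_of_mem u ((mem_neighborFinset _ _ _).2 hvu)]
    intro x hx hxu
    by_contra hwx
    exact hxu (hleaf x (deleteEdges_adj.2 ⟨(mem_neighborFinset _ _ _).1 hx, hwx⟩))
  exact hwvu (hrow.symm.trans (congrFun h0 v))

end SimpleGraph

open Classical in
theorem arbReg_of_incMatrix_mulVec_eq_const {V : Type*} [Fintype V] [DecidableEq V] [Nonempty V]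
    {G : SimpleGraph V} {w : Sym2 V → ℝ} {r : ℝ} (hr : r ≠ 0) (hw : ∀ e ∉ G.edgeSet, w e = 0)
    (h : G.incMatrix ℝ *ᵥ w = fun _ => r) : ArbReg G := by
  have hw0 : w ≠ 0 := by
    rintro rfl
    obtain ⟨v⟩ := ‹Nonempty V›
    exact hr (by simpa using (congrFun h v).symm)
  rcases hr.lt_or_gt with hneg | hpos
  · refine ⟨-w, -r, neg_pos.2 hneg, neg_ne_zero.2 hw0, fun e he => by simp [hw e he], ?_⟩
    rw [mulVec_neg, h]
    rfl
  · exact ⟨w, r, hpos, hw0, hw, h⟩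

open Classical in
/-- For a tree (connected acyclic graph) that is not arbitrarily regularizable, the system
`B w = r e` has only the trivial solution `w = 0`, `r = 0`. -/
theorem tree_not_arb_reg_only_trivial_solution
    {V : Type*} [Fintype V] [DecidableEq V] (G : SimpleGraph V)
    (hc : G.Connected) (hac : G.IsAcyclic) (hnr : ¬ ArbReg G) :
    ∀ (w : Sym2 V → ℝ) (r : ℝ), (∀ e ∉ G.edgeSet, w e = 0) →
      G.incMatrix ℝ *ᵥ w = (fun _ => r) → w = 0 ∧ r = 0 := by
  intro w r hw h
  have := hc.nonempty
  obtain rfl : r = 0 := by_contra fun hr => hnr (arbReg_of_incMatrix_mulVec_eq_const hr hw h)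
  exact ⟨hac.eq_zero_of_incMatrix_mulVec_eq_zero hw h, rfl⟩
end

section
/- For the square n×n matrix A with a_{1j} = a_{nj} = 1 for 2 ≤ j ≤ n−1, a_{i1} = a_{in} = 1 for 2 ≤ i ≤ n−1, a_{1n} = a_{n1} = 1, and all other entries 0 (n ≥ 4), the graph G_A is arbitrarily regularizable and its vulnerability equals n − 4. -/
open Matrix BigOperators

/-!
The graph is the complete split graph on the clique `H = {1, n}` and the independent set of the
`n - 2` middle vertices. An independent set meeting `H` is a single hub, whose neighbourhood is
everything else; any other nonempty independent set lies among the middle vertices and has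
neighbourhood exactly `H`, so `|S| - |N(S)| ≤ (n - 2) - 2`, with equality for the set of all
middle vertices. Weight `1` on hub–middle edges and `4 - n` on the hub–hub edge gives every
vertex weighted degree `2`.
-/

open Finset SimpleGraph

variable {V : Type*}

theorem SimpleGraph.incMatrix_mulVec_apply_s19 {R : Type*} [NonAssocSemiring R] [Fintype V]
    [DecidableEq V] (G : SimpleGraph V) [DecidableRel G.Adj] (w : Sym2 V → R) (v : V) :
    (G.incMatrix R *ᵥ w) v = ∑ u ∈ G.neighborFinset v, w s(v, u) := by
  let edgeTo : V ↪ Sym2 V := ⟨fun u => s(v, u), fun _ _ => Sym2.congr_right.mp⟩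
  have hmap : (G.neighborFinset v).map edgeTo = G.incidenceFinset v := by
    ext e
    induction e using Sym2.ind with
    | _ a b =>
      simp only [mem_map, mem_neighborFinset, mem_incidenceFinset, mk'_mem_incidenceSet_iff]
      constructor
      · rintro ⟨u, hu, h⟩
        rcases Sym2.eq_iff.mp h with ⟨rfl, rfl⟩ | ⟨rfl, rfl⟩
        exacts [⟨hu, .inl rfl⟩, ⟨hu.symm, .inr rfl⟩]
      · rintro ⟨hab, rfl | rfl⟩
        exacts [⟨b, hab, rfl⟩, ⟨a, hab.symm, Sym2.eq_swap⟩]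
  calc (G.incMatrix R *ᵥ w) v = ∑ e ∈ G.incidenceFinset v, w e := by
        simp [mulVec, dotProduct, incMatrix_apply', ite_mul, ← sum_filter,
          Set.filter_mem_univ_eq_toFinset, incidenceFinset]
    _ = ∑ u ∈ G.neighborFinset v, w s(v, u) := by rw [← hmap, sum_map]; rfl

theorem Finset.sum_ite_mem_else_one {R : Type*} [CommRing R] [Fintype V] [DecidableEq V]
    (H : Finset V) (c : R) :
    ∑ u, (if u ∈ H then c else 1) = Fintype.card V + #H * (c - 1) := by
  have hg : ∀ u, (if u ∈ H then c else 1) = 1 + if u ∈ H then c - 1 else 0 := by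
    intro u; split_ifs <;> ring
  simp [hg, sum_add_distrib, sum_ite_mem]
  ring

def completeSplitGraph (H : Set V) : SimpleGraph V := SimpleGraph.fromRel fun u _ => u ∈ H

noncomputable def SimpleGraph.surplus (G : SimpleGraph V) (S : Set V) : ℤ :=
  S.ncard - {v | ∃ u ∈ S, G.Adj u v}.ncard

namespace completeSplitGraph

@[simp]
theorem adj {H : Set V} {u v : V} :
    (completeSplitGraph H).Adj u v ↔ u ≠ v ∧ (u ∈ H ∨ v ∈ H) := by
  simp [completeSplitGraph]

section Vulnerability

variable {H S : Set V} {s : V}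

theorem eq_singleton_of_mem (hS : ∀ u ∈ S, ∀ v ∈ S, ¬ (completeSplitGraph H).Adj u v)
    (hs : s ∈ S) (hsH : s ∈ H) : S = {s} :=
  Set.eq_singleton_iff_unique_mem.mpr ⟨hs, fun t ht => by_contra fun hts =>
    hS s hs t ht (adj.mpr ⟨Ne.symm hts, .inl hsH⟩)⟩

theorem surplus_singleton [Finite V] (hs : s ∈ H) :
    (completeSplitGraph H).surplus {s} = 2 - Nat.card V := by
  have hN : {v | ∃ u ∈ ({s} : Set V), (completeSplitGraph H).Adj u v} = {s}ᶜ := by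
    ext v; simp [hs, eq_comm]
  have := Set.ncard_add_ncard_compl {s}
  rw [Set.ncard_singleton] at this
  simp only [surplus, hN, Set.ncard_singleton]
  omega

theorem surplus_of_disjoint (hne : S.Nonempty) (hd : Disjoint S H) :
    (completeSplitGraph H).surplus S = S.ncard - H.ncard := by
  obtain ⟨u, hu⟩ := hne
  have hN : {v | ∃ u ∈ S, (completeSplitGraph H).Adj u v} = H := by
    ext v
    constructor
    · rintro ⟨w, hw, -, hwH | hvH⟩
      exacts [absurd hwH (Set.disjoint_left.mp hd hw), hvH]
    · exact fun hv => ⟨u, hu, fun huv => Set.disjoint_left.mp hd hu (huv ▸ hv), .inr hv⟩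
  rw [surplus, hN]

theorem independent_compl : ∀ u ∈ Hᶜ, ∀ v ∈ Hᶜ, ¬ (completeSplitGraph H).Adj u v := by
  intro u hu v hv h
  rcases (adj.mp h).2 with h | h
  exacts [hu h, hv h]

theorem surplus_compl [Finite V] (hH : Hᶜ.Nonempty) :
    (completeSplitGraph H).surplus Hᶜ = Nat.card V - 2 * H.ncard := by
  rw [surplus_of_disjoint hH disjoint_compl_left]
  have := Set.ncard_add_ncard_compl H
  omega

theorem surplus_le [Finite V] (hH : H.ncard < Nat.card V) (hne : S.Nonempty)
    (hS : ∀ u ∈ S, ∀ v ∈ S, ¬ (completeSplitGraph H).Adj u v) :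
    (completeSplitGraph H).surplus S ≤ Nat.card V - 2 * H.ncard := by
  by_cases hd : Disjoint S H
  · have := Set.ncard_le_ncard (Set.subset_compl_iff_disjoint_right.mpr hd)
    have := Set.ncard_add_ncard_compl H
    rw [surplus_of_disjoint hne hd]
    omega
  · obtain ⟨s, hs, hsH⟩ := Set.not_disjoint_iff.mp hd
    rw [eq_singleton_of_mem hS hs hsH, surplus_singleton hsH]
    omega

end Vulnerability

section NeighborFinset

variable [Fintype V] {H : Finset V} {v : V} [DecidableRel (completeSplitGraph (H : Set V)).Adj]

theorem neighborFinset_of_mem [DecidableEq V] (hv : v ∈ H) :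
    (completeSplitGraph (H : Set V)).neighborFinset v = univ.erase v := by
  ext u; simp [hv, eq_comm]

theorem neighborFinset_of_notMem (hv : v ∉ H) :
    (completeSplitGraph (H : Set V)).neighborFinset v = H := by
  ext u; simp only [mem_neighborFinset, adj, mem_coe, hv, false_or]; grind

end NeighborFinset

theorem arbReg [Fintype V] [DecidableEq V] (H : Finset V) (h2 : 2 ≤ #H)
    (hlt : #H < Fintype.card V) : ArbReg (completeSplitGraph (H : Set V)) := by
  classical
  set G := completeSplitGraph (H : Set V)
  -- a hub sees `#H - 1` hubs and `card V - #H` middle vertices, so its weighted degree is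
  -- `(#H - 1) c + (card V - #H)`, which `c` makes equal to `#H`, the degree of a middle vertex
  set c : ℝ := (2 * #H - Fintype.card V) / (#H - 1)
  let w : Sym2 V → ℝ := fun e =>
    if e ∈ G.edgeSet then (if ∀ x ∈ e, x ∈ H then c else 1) else 0
  have hw : ∀ u v, G.Adj u v → w s(u, v) = if u ∈ H ∧ v ∈ H then c else 1 := by
    intro u v h
    simp [w, h]
  obtain ⟨hub, hhub⟩ : H.Nonempty := card_pos.mp (by omega)
  obtain ⟨mid, hmid⟩ : ∃ m, m ∉ H := by
    by_contra! hall
    exact hlt.ne (H.card_eq_iff_eq_univ.mpr (eq_univ_iff_forall.mpr hall))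
  refine ⟨w, #H, by positivity, fun hw0 => ?_, fun e he => if_neg he, funext fun v => ?_⟩
  · have hadj : G.Adj hub mid := adj.mpr ⟨fun e => hmid (e ▸ hhub), .inl hhub⟩
    simpa [hw _ _ hadj, hmid] using congrFun hw0 s(hub, mid)
  rw [incMatrix_mulVec_apply_s19]
  by_cases hv : v ∈ H
  · have hk : (#H : ℝ) - 1 ≠ 0 := by
      have : (2 : ℝ) ≤ #H := by exact_mod_cast h2
      linarith
    calc ∑ u ∈ G.neighborFinset v, w s(v, u)
        = ∑ u ∈ univ.erase v, (if u ∈ H then c else 1) :=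
          sum_congr (neighborFinset_of_mem hv) fun u hu => by
            rw [hw _ _ (adj.mpr ⟨(ne_of_mem_erase hu).symm, .inl hv⟩)]; simp [hv]
      _ = Fintype.card V + #H * (c - 1) - c := by
          rw [sum_erase_eq_sub (mem_univ v), sum_ite_mem_else_one, if_pos hv]
      _ = #H := by
          simp only [c]; field_simp; ring
  · calc ∑ u ∈ G.neighborFinset v, w s(v, u) = ∑ u ∈ H, (1 : ℝ) :=
          sum_congr (neighborFinset_of_notMem hv) fun u hu => by
            rw [hw _ _ (adj.mpr ⟨fun e => hv (by rwa [e]), .inr hu⟩)]; simp [hv]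
      _ = #H := by simp

end completeSplitGraph

/-- For the `n × n` matrix `A` (`n ≥ 4`) whose nonzero entries are exactly at the
positions `(i,j)`, `i ≠ j`, where `i` or `j` is the first or the last index (i.e. nodes
`1` and `n` are adjacent to each other and to all middle nodes), the graph `G_A` is
arbitrarily regularizable and its vulnerability
`ν̄ = max { |S| - |N(S)| : S nonempty independent }` equals `n - 4`. -/
theorem chainable_example_arb_reg_vulnerability (n : ℕ) (hn : 4 ≤ n)
    (A : Matrix (Fin n) (Fin n) ℝ)
    (hA : ∀ i j, A i j =
      if i ≠ j ∧ (i.val = 0 ∨ i.val = n - 1 ∨ j.val = 0 ∨ j.val = n - 1) then 1 else 0)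
    (G : SimpleGraph (Fin n)) (hG : ∀ i j, G.Adj i j ↔ A i j ≠ 0) :
    ArbReg G ∧
    (∃ S : Set (Fin n), S.Nonempty ∧ (∀ u ∈ S, ∀ v ∈ S, ¬ G.Adj u v) ∧
      (S.ncard : ℤ) - ({v : Fin n | ∃ u ∈ S, G.Adj u v}.ncard : ℤ) = (n : ℤ) - 4) ∧
    (∀ S : Set (Fin n), S.Nonempty → (∀ u ∈ S, ∀ v ∈ S, ¬ G.Adj u v) →
      (S.ncard : ℤ) - ({v : Fin n | ∃ u ∈ S, G.Adj u v}.ncard : ℤ) ≤ (n : ℤ) - 4) := by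
  set H : Finset (Fin n) := {⟨0, by omega⟩, ⟨n - 1, by omega⟩}
  have hH : #H = 2 := card_pair (by simp [Fin.ext_iff]; omega)
  obtain rfl : G = completeSplitGraph (H : Set (Fin n)) := by
    ext i j
    simp [hG, hA, H, Fin.ext_iff]
    tauto
  have hlt : (H : Set (Fin n)).ncard < Nat.card (Fin n) := by simp [hH]; omega
  have hne : (H : Set (Fin n))ᶜ.Nonempty := ⟨⟨1, by omega⟩, by simp [H, Fin.ext_iff]; omega⟩
  refine ⟨completeSplitGraph.arbReg H (by omega) (by simp [hH]; omega),
    ⟨_, hne, completeSplitGraph.independent_compl, ?_⟩, fun S hS hind => ?_⟩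
  · exact (completeSplitGraph.surplus_compl hne).trans (by simp [hH])
  · exact (completeSplitGraph.surplus_le hlt hS hind).trans_eq (by simp [hH])
end
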